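/- arXiv:2410.15474 — 2 statements merged into one kernel-verified Lean document; each statement's English description precedes it below -/
import Mathlib

section
/- If a pair of forward and backward policies on a finite DAG satisfies the trajectory balance constraint (the forward trajectory probability of every complete trajectory equals R(x)/Z times the backward trajectory probability), then the marginal distribution over terminal states induced by sampling trajectories from the forward policy equals R(x)/Z. -/
/-!
Trajectory balance turns the forward probability of each complete trajectory ending at `x`
into `R x / Z` times its backward probability, so the forward marginal at `x` is `R x / Z` times
the total backward probability of the paths from `s0` to `x`. That total is `1`: splitting off
the last edge of a path and using that `P_B(· | s)` is a distribution over the parents of `s`,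
this follows by induction on the rank of `s`.
-/

open scoped BigOperators Classical

noncomputable section

/-- Product of `f` over consecutive pairs of a list. -/
def pairProd {S : Type*} (f : S → S → ℝ) : List S → ℝ
  | [] => 1
  | [_] => 1
  | a :: b :: l => f a b * pairProd f (b :: l)

/-- A forward policy: nonnegative, supported on edges, and a probability
distribution over children at every non-terminal state. -/
def IsForwardPolicy {S : Type*} [Fintype S] (E : S → S → Prop) (term : S → Prop)
    (PF : S → S → ℝ) : Prop :=
  (∀ s s', 0 ≤ PF s s') ∧ (∀ s s', PF s s' ≠ 0 → E s s') ∧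
    (∀ s, ¬ term s → ∑ s' : S, PF s s' = 1)

/-- A backward policy: `PB s' s` is the probability of the parent `s` given `s'`;
nonnegative, supported on edges, and a probability distribution over parents at
every non-initial state. -/
def IsBackwardPolicy {S : Type*} [Fintype S] (E : S → S → Prop) (s0 : S)
    (PB : S → S → ℝ) : Prop :=
  (∀ s' s, 0 ≤ PB s' s) ∧ (∀ s' s, PB s' s ≠ 0 → E s s') ∧
    (∀ s', s' ≠ s0 → ∑ s : S, PB s' s = 1)

theorem pairProd_append_singleton {S : Type*} (f : S → S → ℝ) {l : List S} {a : S}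
    (h : l.getLast? = some a) (b : S) : pairProd f (l ++ [b]) = pairProd f l * f a b := by
  induction l with
  | nil => simp at h
  | cons c t ih =>
    cases t with
    | nil =>
      obtain rfl : c = a := by simpa using h
      simp [pairProd, mul_comm]
    | cons d t =>
      change f c d * pairProd f (d :: t ++ [b]) = f c d * pairProd f (d :: t) * f a b
      rw [ih h, mul_assoc]

section Paths

variable {S : Type*} (E : S → S → Prop) (s0 : S)

def IsPathTo (s : S) (l : List S) : Prop :=
  l.head? = some s0 ∧ l.IsChain E ∧ l.getLast? = some s

variable {E s0}

theorem isPathTo_append_singleton {l : List S} (hl : l ≠ []) {s : S} :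
    IsPathTo E s0 s (l ++ [s]) ↔ ∃ p, IsPathTo E s0 p l ∧ E p s := by
  obtain ⟨p, hp⟩ := Option.ne_none_iff_exists'.1 (List.getLast?_eq_none_iff.not.2 hl)
  simp only [IsPathTo, List.head?_append_of_ne_nil _ hl, List.isChain_append,
    List.getLast?_concat, List.isChain_singleton, hp]
  grind

theorem isPathTo_iff {s : S} {l : List S} :
    IsPathTo E s0 s l ↔
      (s = s0 ∧ l = [s0]) ∨ ∃ p l', E p s ∧ IsPathTo E s0 p l' ∧ l = l' ++ [s] := by
  constructor
  · intro h
    obtain ⟨l', rfl⟩ := List.getLast?_eq_some_iff.1 h.2.2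
    rcases eq_or_ne l' [] with rfl | hl'
    · left
      simpa [IsPathTo, eq_comm] using h.1
    · obtain ⟨p, hp, hE⟩ := (isPathTo_append_singleton hl').1 h
      exact Or.inr ⟨p, l', hE, hp, rfl⟩
  · rintro (⟨rfl, rfl⟩ | ⟨p, l', hE, hl', rfl⟩)
    · simp [IsPathTo]
    · exact (isPathTo_append_singleton (by rintro rfl; simp [IsPathTo] at hl')).2 ⟨p, hl', hE⟩

end Paths

section PathsTo

variable {S : Type*} [Fintype S] (E : S → S → Prop) (s0 : S)

/-- The paths from `s0` to `s` built by at most `n` backward steps; all of them once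
`n ≥ rank s`. -/
def pathsTo : ℕ → S → Finset (List S)
  | 0, s => if s = s0 then {[s0]} else ∅
  | n + 1, s => if s = s0 then {[s0]} else
      ({p | E p s} : Finset S).biUnion fun p => (pathsTo n p).image (· ++ [s])

variable {E s0}

theorem isPathTo_of_mem_pathsTo {n : ℕ} {s : S} {l : List S} (h : l ∈ pathsTo E s0 n s) :
    IsPathTo E s0 s l := by
  induction n generalizing s l with
  | zero =>
    have : s = s0 ∧ l = [s0] := by unfold pathsTo at h; split_ifs at h <;> simp_all
    exact isPathTo_iff.2 (Or.inl this)
  | succ n ih =>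
    unfold pathsTo at h
    split_ifs at h with hs
    · exact isPathTo_iff.2 (Or.inl ⟨hs, Finset.mem_singleton.1 h⟩)
    · simp only [Finset.mem_biUnion, Finset.mem_filter, Finset.mem_univ, true_and,
        Finset.mem_image] at h
      obtain ⟨p, hE, l', hl', rfl⟩ := h
      exact isPathTo_iff.2 (Or.inr ⟨p, l', hE, ih hl', rfl⟩)

theorem mem_pathsTo_of_isPathTo (hinit : ∀ s, ¬ E s s0) {rank : S → ℕ}
    (hrank : ∀ s s', E s s' → rank s < rank s') {n : ℕ} {s : S} {l : List S}
    (hn : rank s ≤ n) (h : IsPathTo E s0 s l) : l ∈ pathsTo E s0 n s := by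
  induction n generalizing s l with
  | zero =>
    rcases isPathTo_iff.1 h with ⟨rfl, rfl⟩ | ⟨p, l', hE, -, -⟩
    · simp [pathsTo]
    · exact absurd (hrank p s hE) (by omega)
  | succ n ih =>
    rcases isPathTo_iff.1 h with ⟨rfl, rfl⟩ | ⟨p, l', hE, hl', rfl⟩
    · simp [pathsTo]
    · have hs : s ≠ s0 := by rintro rfl; exact hinit p hE
      have hp : rank p ≤ n := by have := hrank p s hE; omega
      simp only [pathsTo, if_neg hs, Finset.mem_biUnion, Finset.mem_filter, Finset.mem_univ,
        true_and, Finset.mem_image]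
      exact ⟨p, hE, l', ih hp hl', rfl⟩

theorem IsBackwardPolicy.sum_parents_eq_one {PB : S → S → ℝ} (hPB : IsBackwardPolicy E s0 PB)
    {s : S} (hs : s ≠ s0) : ∑ p ∈ ({p | E p s} : Finset S), PB s p = 1 := by
  rw [Finset.sum_filter_of_ne fun p _ h => hPB.2.1 s p h]
  exact hPB.2.2 s hs

theorem pairwiseDisjoint_image_append_pathsTo (n : ℕ) (s : S) (t : Finset S) :
    (t : Set S).PairwiseDisjoint fun p => (pathsTo E s0 n p).image (· ++ [s]) := by
  intro p _ q _ hpq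
  rw [Function.onFun, Finset.disjoint_left]
  rintro _ hp hq
  obtain ⟨l, hl, rfl⟩ := Finset.mem_image.1 hp
  obtain ⟨l', hl', hll'⟩ := Finset.mem_image.1 hq
  obtain rfl := List.append_cancel_right hll'
  exact hpq (Option.some.inj <|
    (isPathTo_of_mem_pathsTo hl).2.2.symm.trans (isPathTo_of_mem_pathsTo hl').2.2)

theorem sum_pairProd_backward_pathsTo {rank : S → ℕ}
    (hrank : ∀ s s', E s s' → rank s < rank s') {PB : S → S → ℝ}
    (hPB : IsBackwardPolicy E s0 PB) {n : ℕ} {s : S} (hn : rank s ≤ n) :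
    ∑ l ∈ pathsTo E s0 n s, pairProd (fun a b => PB b a) l = 1 := by
  induction n generalizing s with
  | zero =>
    by_cases hs : s = s0
    · simp [pathsTo, hs, pairProd]
    -- a state of rank 0 has no parent, so `P_B(· | s)` cannot sum to 1 unless `s = s0`
    have hparents := hPB.sum_parents_eq_one hs
    rw [Finset.sum_eq_zero fun p hp => absurd (hrank p s (Finset.mem_filter.1 hp).2) (by omega)]
      at hparents
    exact absurd hparents zero_ne_one
  | succ n ih =>
    by_cases hs : s = s0
    · simp [pathsTo, hs, pairProd]
    rw [pathsTo, if_neg hs, Finset.sum_biUnion (pairwiseDisjoint_image_append_pathsTo n s _),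
      ← hPB.sum_parents_eq_one hs]
    refine Finset.sum_congr rfl fun p hp => ?_
    have hp : rank p ≤ n := by have := hrank p s (Finset.mem_filter.1 hp).2; omega
    rw [Finset.sum_image (List.append_left_injective _).injOn]
    calc ∑ l ∈ pathsTo E s0 n p, pairProd (fun a b => PB b a) (l ++ [s])
        = (∑ l ∈ pathsTo E s0 n p, pairProd (fun a b => PB b a) l) * PB s p := by
          rw [Finset.sum_mul]
          exact Finset.sum_congr rfl fun l hl =>
            pairProd_append_singleton _ (isPathTo_of_mem_pathsTo hl).2.2 s
      _ = PB s p := by rw [ih hp, one_mul]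

end PathsTo

theorem forward_marginal_of_trajectory_balance_general
    {S : Type*} [Fintype S] [DecidableEq S]
    (E : S → S → Prop) (s0 : S) (term : S → Prop)
    (hinit : ∀ s, ¬ E s s0)
    (rank : S → ℕ) (hrank : ∀ s s', E s s' → rank s < rank s')
    (T : Finset (List S))
    (hT : ∀ l, l ∈ T ↔
      (l.head? = some s0 ∧ l.Chain' E ∧ ∃ x, l.getLast? = some x ∧ term x))
    (R : S → ℝ)
    (Z : ℝ)
    (PF PB : S → S → ℝ)
    (hPB : IsBackwardPolicy E s0 PB)
    (hTB : ∀ l ∈ T, ∀ x, l.getLast? = some x →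
      pairProd PF l = R x / Z * pairProd (fun a b => PB b a) l) :
    ∀ x, term x →
      ∑ l ∈ T.filter (fun l => l.getLast? = some x), pairProd PF l = R x / Z := by
  intro x hx
  have hpaths : T.filter (fun l => l.getLast? = some x) = pathsTo E s0 (rank x) x := by
    ext l
    rw [Finset.mem_filter, hT]
    constructor
    · rintro ⟨⟨hhead, hchain, -⟩, hlast⟩
      exact mem_pathsTo_of_isPathTo hinit hrank le_rfl ⟨hhead, hchain, hlast⟩
    · intro hl
      obtain ⟨hhead, hchain, hlast⟩ := isPathTo_of_mem_pathsTo hl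
      exact ⟨⟨hhead, hchain, x, hlast, hx⟩, hlast⟩
  calc ∑ l ∈ T.filter (fun l => l.getLast? = some x), pairProd PF l
      = ∑ l ∈ T.filter (fun l => l.getLast? = some x),
          R x / Z * pairProd (fun a b => PB b a) l :=
        Finset.sum_congr rfl fun l hl =>
          hTB l (Finset.mem_filter.1 hl).1 x (Finset.mem_filter.1 hl).2
    _ = R x / Z := by
      rw [← Finset.mul_sum, hpaths, sum_pairProd_backward_pathsTo hrank hPB le_rfl, mul_one]

/-- If trajectory balance holds for every complete trajectory, then the marginal
distribution over terminal states induced by the forward policy is `R x / Z`. -/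
theorem forward_marginal_of_trajectory_balance
    {S : Type*} [Fintype S] [DecidableEq S]
    (E : S → S → Prop) (s0 : S) (term : S → Prop)
    (hterm : ∀ s, term s ↔ ∀ s', ¬ E s s')
    (hinit : ∀ s, ¬ E s s0)
    (hreach : ∀ s, Relation.ReflTransGen E s0 s)
    (rank : S → ℕ) (hrank : ∀ s s', E s s' → rank s < rank s')
    (T : Finset (List S))
    (hT : ∀ l, l ∈ T ↔
      (l.head? = some s0 ∧ l.Chain' E ∧ ∃ x, l.getLast? = some x ∧ term x))
    (R : S → ℝ) (hR : ∀ x, term x → 0 ≤ R x)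
    (Z : ℝ) (hZ : Z = ∑ x ∈ Finset.univ.filter term, R x) (hZpos : 0 < Z)
    (PF PB : S → S → ℝ)
    (hPF : IsForwardPolicy E term PF)
    (hPB : IsBackwardPolicy E s0 PB)
    (hTB : ∀ l ∈ T, ∀ x, l.getLast? = some x →
      pairProd PF l = R x / Z * pairProd (fun a b => PB b a) l) :
    ∀ x, term x →
      ∑ l ∈ T.filter (fun l => l.getLast? = some x), pairProd PF l = R x / Z :=
  forward_marginal_of_trajectory_balance_general E s0 term hinit rank hrank T hT R Z PF PB hPB hTB

end
end

section
/- Given any fixed backward policy P_B on a finite DAG with reward R (with Z > 0), there exists a unique forward policy P_F satisfying the trajectory balance constraint with P_B, provided every state lies on at least one complete trajectory with positive backward probability. -/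
/-!
Push the reward backwards through `P_B`: the flow `F x = R x` at terminal states and
`F s = ∑ t, P_B(s | t) F t` elsewhere is well defined because edges increase `rank`, and it is
positive at every state on a complete trajectory of positive backward probability. Summing the
recursion over the non-terminal states, the backward probabilities out of every state other than
`s₀` add up to one, so the non-terminal flow equals the flow of all states but `s₀`; hence
`F s₀ = Z`. The forward policy `P_F(t | s) = P_B(s | t) F t / F s` telescopes along every
trajectory, which gives trajectory balance.

Conversely, a forward policy satisfying trajectory balance gives every complete trajectory the
same probability as this one. At a non-terminal state `s`, splice a positive-probability prefix
`c` ending at `s` with positive-probability completions from each child `t`: once `P_F` is known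
at all states of higher rank, this determines `P_F(c) P_F(t | s)`, and normalising over `t`
determines both `P_F(c)` and `P_F(· | s)`. Downward induction on rank gives uniqueness.
-/

open scoped BigOperators Classical

noncomputable section

open Finset

section PairProd

variable {S : Type*}

theorem pairProd_cons_cons (f : S → S → ℝ) (a b : S) (l : List S) :
    pairProd f (a :: b :: l) = f a b * pairProd f (b :: l) :=
  rfl

theorem pairProd_nonneg {f : S → S → ℝ} (hf : ∀ a b, 0 ≤ f a b) :
    ∀ l : List S, 0 ≤ pairProd f l
  | [] | [_] => zero_le_one
  | a :: b :: l => mul_nonneg (hf a b) (pairProd_nonneg hf (b :: l))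

theorem pairProd_append_cons (f : S → S → ℝ) :
    ∀ (l₁ : List S) (a : S) (l₂ : List S),
      pairProd f (l₁ ++ a :: l₂) = pairProd f (l₁ ++ [a]) * pairProd f (a :: l₂)
  | [], _, _ | [_], _, _ => by simp [pairProd]
  | b :: c :: l₁, a, l₂ => by
      have ih := pairProd_append_cons f (c :: l₁) a l₂
      simp only [List.cons_append] at ih ⊢
      rw [pairProd_cons_cons, pairProd_cons_cons, ih, mul_assoc]

theorem pairProd_congr {f g : S → S → ℝ} :
    ∀ {l : List S}, (∀ a ∈ l, ∀ b, f a b = g a b) → pairProd f l = pairProd g l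
  | [], _ | [_], _ => rfl
  | a :: b :: l, h => by
      rw [pairProd_cons_cons, pairProd_cons_cons, h a List.mem_cons_self,
        pairProd_congr fun p hp q => h p (List.mem_cons_of_mem a hp) q]

theorem pos_of_pairProd_append_cons_pos {f : S → S → ℝ} (hf : ∀ a b, 0 ≤ f a b)
    {l₁ l₂ : List S} {a : S} (h : 0 < pairProd f (l₁ ++ a :: l₂)) :
    0 < pairProd f (l₁ ++ [a]) ∧ 0 < pairProd f (a :: l₂) := by
  rw [pairProd_append_cons] at h
  exact ⟨pos_of_mul_pos_left h (pairProd_nonneg hf _),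
    pos_of_mul_pos_right h (pairProd_nonneg hf _)⟩

end PairProd

def IsPath {S : Type*} (E : S → S → Prop) (a b : S) (l : List S) : Prop :=
  l.head? = some a ∧ l.IsChain E ∧ l.getLast? = some b

namespace IsPath

variable {S : Type*} {E : S → S → Prop} {a b c d : S}

theorem singleton_iff : IsPath E a b [c] ↔ c = a ∧ c = b := by
  simp [IsPath]

theorem cons_cons_iff {l : List S} :
    IsPath E a b (c :: d :: l) ↔ c = a ∧ E c d ∧ IsPath E d b (d :: l) := by
  simp only [IsPath, List.head?_cons, Option.some.injEq, List.isChain_cons_cons,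
    List.getLast?_cons_cons, true_and]
  tauto

theorem append_cons_iff {l₁ l₂ : List S} :
    IsPath E a b (l₁ ++ c :: l₂) ↔ IsPath E a c (l₁ ++ [c]) ∧ IsPath E c b (c :: l₂) := by
  have hhead : (l₁ ++ c :: l₂).head? = (l₁ ++ [c]).head? := by simp [List.head?_append]
  rw [IsPath, IsPath, IsPath, hhead, List.isChain_split, List.getLast?_append_cons,
    List.getLast?_concat]
  simp only [List.head?_cons, and_true, true_and, and_assoc]

theorem rank_lt {rank : S → ℕ} (hrank : ∀ s s', E s s' → rank s < rank s') {l : List S}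
    (h : IsPath E a b (a :: l)) {p : S} (hp : p ∈ l) : rank a < rank p := by
  have hmap : ((a :: l).map rank).IsChain (· < ·) :=
    (List.isChain_map rank).mpr (h.2.1.imp hrank)
  exact List.rel_of_pairwise_cons (List.pairwise_map.mp (List.isChain_iff_pairwise.mp hmap)) hp

theorem pairProd_mul_eq {f g : S → S → ℝ} {w : S → ℝ}
    (h : ∀ a b, E a b → f a b * w a = g a b * w b) :
    ∀ {a b : S} {l : List S}, IsPath E a b l → pairProd f l * w a = pairProd g l * w b
  | _, _, [], hl => absurd hl.1 (by simp)
  | _, _, [_], hl => by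
      obtain ⟨rfl, rfl⟩ := singleton_iff.mp hl
      simp [pairProd]
  | _, _, c :: d :: l, hl => by
      obtain ⟨rfl, hcd, hl⟩ := cons_cons_iff.mp hl
      rw [pairProd_cons_cons, pairProd_cons_cons, mul_right_comm, h c d hcd, mul_assoc,
        mul_comm (w d), pairProd_mul_eq h hl, mul_assoc]

theorem pairProd_mul_le {g : S → S → ℝ} {w : S → ℝ} (hg : ∀ a b, 0 ≤ g a b)
    (h : ∀ a b, E a b → g a b * w b ≤ w a) :
    ∀ {a b : S} {l : List S}, IsPath E a b l → pairProd g l * w b ≤ w a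
  | _, _, [], hl => absurd hl.1 (by simp)
  | _, _, [_], hl => by
      obtain ⟨rfl, rfl⟩ := singleton_iff.mp hl
      simp [pairProd]
  | _, b, c :: d :: l, hl => by
      obtain ⟨rfl, hcd, hl⟩ := cons_cons_iff.mp hl
      rw [pairProd_cons_cons]
      calc g c d * pairProd g (d :: l) * w b
          = g c d * (pairProd g (d :: l) * w b) := mul_assoc _ _ _
        _ ≤ g c d * w d := mul_le_mul_of_nonneg_left (pairProd_mul_le hg h hl) (hg c d)
        _ ≤ w c := h c d hcd

end IsPath

theorem isPath_and_iff_of_getLast?_eq {S : Type*} {E : S → S → Prop} {term : S → Prop}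
    {a x : S} {l : List S} (hlx : l.getLast? = some x) :
    (l.head? = some a ∧ l.IsChain E ∧ ∃ y, l.getLast? = some y ∧ term y) ↔
      IsPath E a x l ∧ term x := by
  refine ⟨fun ⟨hhead, hchain, y, hly, hy⟩ => ?_, fun ⟨hl, hx⟩ => ⟨hl.1, hl.2.1, x, hlx, hx⟩⟩
  obtain rfl : y = x := Option.some_injective _ (hly.symm.trans hlx)
  exact ⟨⟨hhead, hchain, hly⟩, hy⟩

def forwardOfFlow {S : Type*} (PB : S → S → ℝ) (w : S → ℝ) (s t : S) : ℝ :=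
  PB t s * w t / w s

theorem IsPath.pairProd_forwardOfFlow {S : Type*} {E : S → S → Prop} {PB : S → S → ℝ}
    {w : S → ℝ} (hw : ∀ s, w s ≠ 0) {a b : S} {l : List S} (hl : IsPath E a b l) :
    pairProd (forwardOfFlow PB w) l = pairProd (fun s t => PB t s) l * w b / w a := by
  rw [eq_div_iff (hw a)]
  exact hl.pairProd_mul_eq fun s t _ => div_mul_cancel₀ (PB t s * w t) (hw s)

theorem IsBackwardPolicy.sum_apply {S : Type*} [Fintype S] {E : S → S → Prop} {s0 : S}
    {PB : S → S → ℝ} (hPB : IsBackwardPolicy E s0 PB) (hinit : ∀ s, ¬ E s s0) (t : S) :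
    ∑ s, PB t s = if t = s0 then 0 else 1 := by
  split_ifs with ht
  · subst ht
    exact sum_eq_zero fun s _ => not_not.mp fun h => hinit s (hPB.2.1 t s h)
  · exact hPB.2.2 t ht

section Flow

variable {S : Type*} [Fintype S] {E : S → S → Prop} {term : S → Prop} {rank : S → ℕ}
  {R : S → ℝ} {PB : S → S → ℝ}

/-- Summing only over states of higher rank makes the recursion well-founded; when `PB` is
supported on edges this is the full sum, see `backwardFlow_of_not_term`. -/
def backwardFlow (term : S → Prop) (rank : S → ℕ) (R : S → ℝ) (PB : S → S → ℝ) (s : S) : ℝ :=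
  if term s then R s
  else ∑ t : {t // rank s < rank t}, PB t s * backwardFlow term rank R PB t
termination_by univ.sup rank - rank s
decreasing_by
  have := le_sup (f := rank) (mem_univ t.1)
  have := t.2
  omega

theorem backwardFlow_of_term {s : S} (hs : term s) : backwardFlow term rank R PB s = R s := by
  rw [backwardFlow, if_pos hs]

theorem backwardFlow_of_not_term (hPB : ∀ t s, PB t s ≠ 0 → E s t)
    (hrank : ∀ s t, E s t → rank s < rank t) {s : S} (hs : ¬ term s) :
    backwardFlow term rank R PB s = ∑ t, PB t s * backwardFlow term rank R PB t := by
  rw [backwardFlow, if_neg hs, ← sum_subtype (univ.filter (rank s < rank ·)) (by simp)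
    fun t => PB t s * backwardFlow term rank R PB t, sum_filter_of_ne]
  intro t _ ht
  exact hrank s t (hPB t s (left_ne_zero_of_mul ht))

theorem backwardFlow_nonneg (hR : ∀ x, term x → 0 ≤ R x) (hPB : ∀ t s, 0 ≤ PB t s) (s : S) :
    0 ≤ backwardFlow term rank R PB s := by
  fun_induction backwardFlow term rank R PB s with
  | case1 s hs => exact hR s hs
  | case2 s _ ih => exact sum_nonneg fun t _ => mul_nonneg (hPB t s) (ih t)

theorem backwardFlow_le_of_rel (hR : ∀ x, term x → 0 ≤ R x) (hPB0 : ∀ t s, 0 ≤ PB t s)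
    (hPBE : ∀ t s, PB t s ≠ 0 → E s t) (hrank : ∀ s t, E s t → rank s < rank t)
    (hterm : ∀ s t, E s t → ¬ term s) {a b : S} (hab : E a b) :
    PB b a * backwardFlow term rank R PB b ≤ backwardFlow term rank R PB a := by
  rw [backwardFlow_of_not_term hPBE hrank (hterm a b hab)]
  exact single_le_sum (fun t _ => mul_nonneg (hPB0 t a) (backwardFlow_nonneg hR hPB0 t))
    (mem_univ b)

theorem backwardFlow_pos (hR : ∀ x, term x → 0 < R x) (hPB0 : ∀ t s, 0 ≤ PB t s)
    (hPBE : ∀ t s, PB t s ≠ 0 → E s t) (hrank : ∀ s t, E s t → rank s < rank t)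
    (hterm : ∀ s t, E s t → ¬ term s) {a s x : S} {l : List S} (hl : IsPath E a x l)
    (hx : term x) (hsl : s ∈ l) (hlpos : 0 < pairProd (fun s t => PB t s) l) :
    0 < backwardFlow term rank R PB s := by
  obtain ⟨l₁, l₂, rfl⟩ := List.append_of_mem hsl
  have hm : 0 < pairProd (fun s t => PB t s) (s :: l₂) :=
    (pos_of_pairProd_append_cons_pos (fun s t => hPB0 t s) hlpos).2
  calc 0 < pairProd (fun s t => PB t s) (s :: l₂) * R x := mul_pos hm (hR x hx)
    _ = pairProd (fun s t => PB t s) (s :: l₂) * backwardFlow term rank R PB x := by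
      rw [backwardFlow_of_term hx]
    _ ≤ backwardFlow term rank R PB s :=
      (IsPath.append_cons_iff.mp hl).2.pairProd_mul_le (fun s t => hPB0 t s)
        fun _ _ => backwardFlow_le_of_rel (fun x hx => (hR x hx).le) hPB0 hPBE hrank hterm

theorem backwardFlow_initial {s0 : S} (hPB : IsBackwardPolicy E s0 PB) (hinit : ∀ s, ¬ E s s0)
    (hrank : ∀ s t, E s t → rank s < rank t) (hterm : ∀ s t, E s t → ¬ term s) :
    backwardFlow term rank R PB s0 = ∑ x ∈ univ.filter term, R x := by
  set w := backwardFlow term rank R PB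
  have hinner : ∑ s ∈ univ.filter (¬ term ·), w s = ∑ t ∈ univ.erase s0, w t :=
    calc ∑ s ∈ univ.filter (¬ term ·), w s
        = ∑ s ∈ univ.filter (¬ term ·), ∑ t, PB t s * w t :=
          sum_congr rfl fun s hs => backwardFlow_of_not_term hPB.2.1 hrank (mem_filter.mp hs).2
      _ = ∑ s, ∑ t, PB t s * w t := by
          refine sum_filter_of_ne fun s _ hs => ?_
          obtain ⟨t, _, ht⟩ := exists_ne_zero_of_sum_ne_zero hs
          exact hterm s t (hPB.2.1 t s (left_ne_zero_of_mul ht))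
      _ = ∑ t, (∑ s, PB t s) * w t := by
          rw [sum_comm]
          simp only [sum_mul]
      _ = ∑ t ∈ univ.erase s0, w t := by
          simp [hPB.sum_apply hinit, ite_mul, sum_ite, filter_ne']
  have hsplit := sum_filter_add_sum_filter_not univ term w
  rw [← add_sum_erase univ w (mem_univ s0), hinner,
    sum_congr rfl fun x hx => backwardFlow_of_term (mem_filter.mp hx).2] at hsplit
  linarith

end Flow

theorem pairProd_prefix_mul_eq {S : Type*} {E : S → S → Prop} {term : S → Prop} {s0 : S}
    {F G : S → S → ℝ}
    (hFG : ∀ l x, IsPath E s0 x l → term x → pairProd F l = pairProd G l)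
    {l₁ m : List S} {s t y : S} (hpre : IsPath E s0 s (l₁ ++ [s])) (hst : E s t)
    (hsuf : IsPath E t y (t :: m)) (hy : term y) (hagree : ∀ p ∈ t :: m, F p = G p)
    (hFm : 0 < pairProd F (t :: m)) :
    pairProd F (l₁ ++ [s]) * F s t = pairProd G (l₁ ++ [s]) * G s t := by
  have hpath : IsPath E s0 y (l₁ ++ s :: t :: m) :=
    IsPath.append_cons_iff.mpr ⟨hpre, IsPath.cons_cons_iff.mpr ⟨rfl, hst, hsuf⟩⟩
  have hsplit := hFG _ _ hpath hy
  rw [pairProd_append_cons F, pairProd_append_cons G, pairProd_cons_cons, pairProd_cons_cons,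
    pairProd_congr fun p hp q => (congrFun (hagree p hp) q).symm] at hsplit
  exact mul_right_cancel₀ hFm.ne' (by linear_combination hsplit)

section ForwardPolicy

variable {S : Type*} [Fintype S] {E : S → S → Prop} {term : S → Prop}

theorem isForwardPolicy_forwardOfFlow {PB : S → S → ℝ} {w : S → ℝ}
    (hPB0 : ∀ t s, 0 ≤ PB t s) (hPBE : ∀ t s, PB t s ≠ 0 → E s t) (hw : ∀ s, 0 < w s)
    (hrec : ∀ s, ¬ term s → w s = ∑ t, PB t s * w t) :
    IsForwardPolicy E term (forwardOfFlow PB w) := by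
  refine ⟨fun s t => div_nonneg (mul_nonneg (hPB0 t s) (hw t).le) (hw s).le,
    fun s t h => hPBE t s (left_ne_zero_of_mul (left_ne_zero_of_mul h)), fun s hs => ?_⟩
  simp only [forwardOfFlow, ← sum_div, ← hrec s hs, div_self (hw s).ne']

theorem IsForwardPolicy.eq_zero_of_not_rel {F : S → S → ℝ} (hF : IsForwardPolicy E term F)
    {s t : S} (hst : ¬ E s t) : F s t = 0 :=
  not_not.mp fun h => hst (hF.2.1 s t h)

theorem IsForwardPolicy.eq_of_pairProd_eq {s0 : S} {F G : S → S → ℝ} {rank : S → ℕ}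
    (hF : IsForwardPolicy E term F) (hG : IsForwardPolicy E term G)
    (hterm : ∀ s t, E s t → ¬ term s)
    (hrank : ∀ s t, E s t → rank s < rank t)
    (hFG : ∀ l x, IsPath E s0 x l → term x → pairProd F l = pairProd G l)
    (hvisit : ∀ s, ∃ l x, IsPath E s0 x l ∧ term x ∧ s ∈ l ∧ 0 < pairProd F l) : F = G := by
  funext s
  induction s using (Finite.wellFounded_of_trans_of_irrefl (InvImage (· > ·) rank)).induction
    with | _ s ih
  by_cases hs : term s
  · funext t
    rw [hF.eq_zero_of_not_rel (hterm s t · hs), hG.eq_zero_of_not_rel (hterm s t · hs)]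
  obtain ⟨l, x, hl, -, hsl, hFl⟩ := hvisit s
  obtain ⟨l₁, l₂, rfl⟩ := List.append_of_mem hsl
  have hedge : ∀ t, pairProd F (l₁ ++ [s]) * F s t = pairProd G (l₁ ++ [s]) * G s t := by
    intro t
    by_cases hst : E s t
    · obtain ⟨m, y, hm, hy, htm, hFm⟩ := hvisit t
      obtain ⟨m₁, m₂, rfl⟩ := List.append_of_mem htm
      have hsuf := (IsPath.append_cons_iff.mp hm).2
      refine pairProd_prefix_mul_eq hFG (IsPath.append_cons_iff.mp hl).1 hst hsuf hy
        (fun p hp => ih p ?_) (pos_of_pairProd_append_cons_pos hF.1 hFm).2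
      exact (IsPath.cons_cons_iff.mpr ⟨rfl, hst, hsuf⟩).rank_lt hrank hp
    · rw [hF.eq_zero_of_not_rel hst, hG.eq_zero_of_not_rel hst, mul_zero, mul_zero]
  have hprefix : pairProd F (l₁ ++ [s]) = pairProd G (l₁ ++ [s]) := by
    simpa [← mul_sum, hF.2.2 s hs, hG.2.2 s hs] using
      sum_congr (s₁ := univ) rfl fun t _ => hedge t
  funext t
  exact mul_left_cancel₀ (pos_of_pairProd_append_cons_pos hF.1 hFl).1.ne'
    (by rw [hedge t, hprefix])

end ForwardPolicy

theorem existsUnique_forward_of_backward_general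
    {S : Type*} [Fintype S]
    (E : S → S → Prop) (s0 : S) (term : S → Prop)
    (hterm : ∀ s, term s ↔ ∀ s', ¬ E s s')
    (hinit : ∀ s, ¬ E s s0)
    (rank : S → ℕ) (hrank : ∀ s s', E s s' → rank s < rank s')
    (T : Finset (List S))
    (hT : ∀ l, l ∈ T ↔
      (l.head? = some s0 ∧ l.Chain' E ∧ ∃ x, l.getLast? = some x ∧ term x))
    (R : S → ℝ) (hR : ∀ x, term x → 0 < R x)
    (Z : ℝ) (hZ : Z = ∑ x ∈ Finset.univ.filter term, R x)
    (PB : S → S → ℝ) (hPB : IsBackwardPolicy E s0 PB)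
    (hpos : ∀ s : S, ∃ l ∈ T, s ∈ l ∧ 0 < pairProd (fun a b => PB b a) l) :
    ∃! PF : S → S → ℝ, IsForwardPolicy E term PF ∧
      ∀ l ∈ T, ∀ x, l.getLast? = some x →
        pairProd PF l = R x / Z * pairProd (fun a b => PB b a) l := by
  have hterm' : ∀ s t, E s t → ¬ term s := fun s t hst hs => (hterm s).mp hs t hst
  have hmemT : ∀ l x, l.getLast? = some x → (l ∈ T ↔ IsPath E s0 x l ∧ term x) :=
    fun l x hlx => (hT l).trans (isPath_and_iff_of_getLast?_eq hlx)
  have hvisit : ∀ s, ∃ l x, IsPath E s0 x l ∧ term x ∧ s ∈ l ∧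
      0 < pairProd (fun a b => PB b a) l := by
    intro s
    obtain ⟨l, hl, hsl, hlpos⟩ := hpos s
    obtain ⟨-, -, x, hlx, -⟩ := (hT l).mp hl
    obtain ⟨hl, hx⟩ := (hmemT l x hlx).mp hl
    exact ⟨l, x, hl, hx, hsl, hlpos⟩
  set w := backwardFlow term rank R PB
  have hw : ∀ s, 0 < w s := fun s => by
    obtain ⟨l, x, hl, hx, hsl, hlpos⟩ := hvisit s
    exact backwardFlow_pos hR hPB.1 hPB.2.1 hrank hterm' hl hx hsl hlpos
  have hZw : w s0 = Z := hZ ▸ backwardFlow_initial hPB hinit hrank hterm'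
  have hF : IsForwardPolicy E term (forwardOfFlow PB w) :=
    isForwardPolicy_forwardOfFlow hPB.1 hPB.2.1 hw
      fun s hs => backwardFlow_of_not_term hPB.2.1 hrank hs
  have hTB : ∀ l x, IsPath E s0 x l → term x →
      pairProd (forwardOfFlow PB w) l = R x / Z * pairProd (fun a b => PB b a) l := by
    intro l x hl hx
    have hwx : w x = R x := backwardFlow_of_term hx
    rw [hl.pairProd_forwardOfFlow fun s => (hw s).ne', hZw, hwx]
    ring
  refine ⟨forwardOfFlow PB w, ⟨hF, fun l hl x hlx => ((hmemT l x hlx).mp hl).elim (hTB l x)⟩, ?_⟩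
  rintro PF ⟨hPF, hPFTB⟩
  refine (hF.eq_of_pairProd_eq (s0 := s0) hPF hterm' hrank (fun l x hl hx => ?_)
    fun s => ?_).symm
  · rw [hTB l x hl hx, hPFTB l ((hmemT l x hl.2.2).mpr ⟨hl, hx⟩) x hl.2.2]
  · obtain ⟨l, x, hl, hx, hsl, hlpos⟩ := hvisit s
    refine ⟨l, x, hl, hx, hsl, ?_⟩
    rw [hTB l x hl hx]
    exact mul_pos (div_pos (hR x hx) (hZw ▸ hw s0)) hlpos

/-- Given a fixed backward policy `PB`, if every state lies on at least one complete
trajectory with positive backward probability, then there is a unique forward policy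
satisfying the trajectory balance constraint with `PB`. -/
theorem existsUnique_forward_of_backward
    {S : Type*} [Fintype S] [DecidableEq S]
    (E : S → S → Prop) (s0 : S) (term : S → Prop)
    (hterm : ∀ s, term s ↔ ∀ s', ¬ E s s')
    (hinit : ∀ s, ¬ E s s0)
    (hreach : ∀ s, Relation.ReflTransGen E s0 s)
    (rank : S → ℕ) (hrank : ∀ s s', E s s' → rank s < rank s')
    (T : Finset (List S))
    (hT : ∀ l, l ∈ T ↔
      (l.head? = some s0 ∧ l.Chain' E ∧ ∃ x, l.getLast? = some x ∧ term x))
    (R : S → ℝ) (hR : ∀ x, term x → 0 < R x)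
    (Z : ℝ) (hZ : Z = ∑ x ∈ Finset.univ.filter term, R x) (hZpos : 0 < Z)
    (PB : S → S → ℝ) (hPB : IsBackwardPolicy E s0 PB)
    (hpos : ∀ s : S, ∃ l ∈ T, s ∈ l ∧ 0 < pairProd (fun a b => PB b a) l) :
    ∃! PF : S → S → ℝ, IsForwardPolicy E term PF ∧
      ∀ l ∈ T, ∀ x, l.getLast? = some x →
        pairProd PF l = R x / Z * pairProd (fun a b => PB b a) l :=
  existsUnique_forward_of_backward_general E s0 term hterm hinit rank hrank T hT R hR Z hZ PB hPB
    hpos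
end
end
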